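/- Let N be a positive integer and μ, ε > 0 real. Let D₁, D₂, D₃ be pairwise commuting skew-symmetric real N×N matrices, 𝔻 := [[0, −D₃, D₂], [D₃, 0, −D₁], [−D₂, D₁, 0]] (3N×3N), 𝒟 := (1/√(με))·[[0, −𝔻], [𝔻, 0]] (6N×6N), and for k = 1, 2, 3 let B_k be the block-diagonal 3N×3N matrix with each diagonal block equal to D_k. Given H⁰, E⁰ ∈ ℝ^(3N), define (√μ·H^t, √ε·E^t) = exp(t𝒟)·(√μ·H⁰, √ε·E⁰). Then for each k = 1, 2, 3 and all t ∈ ℝ: μ·‖B_k H^t‖² + ε·‖B_k E^t‖² = μ·‖B_k H⁰‖² + ε·‖B_k E⁰‖². -/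

import Mathlib

/-!
Writing `u = (√μ H, √ε E)`, the scheme is `uᵗ = exp(t𝒟) u⁰` with `𝒟` skew-symmetric (the discrete
curl `𝔻` is symmetric because the `Dₖ` are skew), so `exp(t𝒟)` is orthogonal. Since the `Dₖ`
commute, `diag(Bₖ, Bₖ)` commutes with `𝒟`, hence with `exp(t𝒟)`, and
`μ‖Bₖ Hᵗ‖² + ε‖Bₖ Eᵗ‖² = ‖diag(Bₖ, Bₖ) uᵗ‖² = ‖exp(t𝒟) diag(Bₖ, Bₖ) u⁰‖² = ‖diag(Bₖ, Bₖ) u⁰‖²`.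
-/

open Matrix

/-- A `3N × 3N` block matrix built from a `3 × 3` array of `N × N` blocks. -/
def blockMat3 {N : ℕ} {α : Type*} (A : Fin 3 → Fin 3 → Matrix (Fin N) (Fin N) α) :
    Matrix (Fin 3 × Fin N) (Fin 3 × Fin N) α :=
  Matrix.of fun p q => A p.1 q.1 p.2 q.2

/-- The `3N × 3N` block-diagonal matrix with each diagonal block equal to `D`. -/
def blockDiag3 {N : ℕ} {α : Type*} [Zero α] (D : Matrix (Fin N) (Fin N) α) :
    Matrix (Fin 3 × Fin N) (Fin 3 × Fin N) α :=
  Matrix.of fun p q => if p.1 = q.1 then D p.2 q.2 else 0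

open NormedSpace

section Orthogonal

variable {n : Type*} [Fintype n] [DecidableEq n]

theorem Matrix.transpose_exp_mul_exp_of_transpose_eq_neg {A : Matrix n n ℝ} (hA : Aᵀ = -A) :
    (exp A)ᵀ * exp A = 1 := by
  rw [← Matrix.exp_transpose, hA, ← Matrix.exp_add_of_commute _ _ (Commute.refl A).neg_left,
    neg_add_cancel, exp_zero]

theorem Matrix.sum_sq_mulVec_of_transpose_mul_self {Q : Matrix n n ℝ} (hQ : Qᵀ * Q = 1)
    (v : n → ℝ) : ∑ i, (Q *ᵥ v) i ^ 2 = ∑ i, v i ^ 2 := by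
  simp only [sq]
  change (Q *ᵥ v) ⬝ᵥ (Q *ᵥ v) = v ⬝ᵥ v
  rw [dotProduct_mulVec, ← mulVec_transpose, mulVec_mulVec, hQ, one_mulVec]

theorem Matrix.sum_sq_mulVec_exp_mulVec {A B : Matrix n n ℝ} (hA : Aᵀ = -A) (hBA : Commute B A)
    (v : n → ℝ) : ∑ i, (B *ᵥ (exp A *ᵥ v)) i ^ 2 = ∑ i, (B *ᵥ v) i ^ 2 := by
  rw [mulVec_mulVec, hBA.exp_right.eq, ← mulVec_mulVec,
    sum_sq_mulVec_of_transpose_mul_self (transpose_exp_mul_exp_of_transpose_eq_neg hA)]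

end Orthogonal

section TwoByTwo

variable {m R : Type*} [Ring R]

theorem Matrix.fromBlocks_zero_neg_transpose {M : Matrix m m R} (hM : Mᵀ = M) :
    (fromBlocks 0 (-M) M 0)ᵀ = -fromBlocks 0 (-M) M 0 := by
  rw [fromBlocks_transpose, transpose_neg, hM, fromBlocks_neg]
  simp

variable [Fintype m]

theorem Matrix.commute_fromBlocks_diag_fromBlocks_zero_neg {B M : Matrix m m R}
    (h : Commute B M) : Commute (fromBlocks B 0 0 B) (fromBlocks 0 (-M) M 0) := by
  simp [Commute, SemiconjBy, fromBlocks_multiply, h.eq]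

theorem Matrix.fromBlocks_diag_mulVec_sumElim (B : Matrix m m R) (x y : m → R) :
    fromBlocks B 0 0 B *ᵥ Sum.elim x y = Sum.elim (B *ᵥ x) (B *ᵥ y) := by
  simp [fromBlocks_mulVec]

end TwoByTwo

theorem sum_sq_sumElim_sqrt_smul {m : Type*} [Fintype m] {μ ε : ℝ} (hμ : 0 ≤ μ) (hε : 0 ≤ ε)
    (x y : m → ℝ) :
    ∑ i, Sum.elim (√μ • x) (√ε • y) i ^ 2 = μ * ∑ i, x i ^ 2 + ε * ∑ i, y i ^ 2 := by
  simp [Fintype.sum_sum_type, mul_pow, Real.sq_sqrt hμ, Real.sq_sqrt hε, Finset.mul_sum]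

section ThreeByThree

variable {N : ℕ} {R : Type*}

def discreteCurl [Neg R] [Zero R] (D1 D2 D3 : Matrix (Fin N) (Fin N) R) :
    Matrix (Fin 3 × Fin N) (Fin 3 × Fin N) R :=
  blockMat3 ![![0, -D3, D2], ![D3, 0, -D1], ![-D2, D1, 0]]

theorem blockMat3_transpose (A : Fin 3 → Fin 3 → Matrix (Fin N) (Fin N) R) :
    (blockMat3 A)ᵀ = blockMat3 fun i j => (A j i)ᵀ := rfl

variable [Semiring R]

theorem blockDiag3_mul_blockMat3 (D : Matrix (Fin N) (Fin N) R)
    (A : Fin 3 → Fin 3 → Matrix (Fin N) (Fin N) R) :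
    blockDiag3 D * blockMat3 A = blockMat3 fun i j => D * A i j := by
  ext ⟨i, a⟩ ⟨j, b⟩
  simp [blockDiag3, blockMat3, mul_apply, Fintype.sum_prod_type, ite_mul]

theorem blockMat3_mul_blockDiag3 (D : Matrix (Fin N) (Fin N) R)
    (A : Fin 3 → Fin 3 → Matrix (Fin N) (Fin N) R) :
    blockMat3 A * blockDiag3 D = blockMat3 fun i j => A i j * D := by
  ext ⟨i, a⟩ ⟨j, b⟩
  simp [blockDiag3, blockMat3, mul_apply, Fintype.sum_prod_type, mul_ite]

theorem commute_blockDiag3_blockMat3 {D : Matrix (Fin N) (Fin N) R}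
    {A : Fin 3 → Fin 3 → Matrix (Fin N) (Fin N) R} (h : ∀ i j, Commute D (A i j)) :
    Commute (blockDiag3 D) (blockMat3 A) := by
  rw [Commute, SemiconjBy, blockDiag3_mul_blockMat3, blockMat3_mul_blockDiag3]
  exact congrArg blockMat3 (funext₂ fun i j => (h i j).eq)

end ThreeByThree

section Curl

variable {N : ℕ} {R : Type*} [Ring R] {D1 D2 D3 : Matrix (Fin N) (Fin N) R}

theorem discreteCurl_transpose (hD1 : D1ᵀ = -D1) (hD2 : D2ᵀ = -D2) (hD3 : D3ᵀ = -D3) :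
    (discreteCurl D1 D2 D3)ᵀ = discreteCurl D1 D2 D3 := by
  rw [discreteCurl, blockMat3_transpose]
  refine congrArg blockMat3 (funext₂ fun i j => ?_)
  fin_cases i <;> fin_cases j <;> simp [hD1, hD2, hD3]

theorem commute_blockDiag3_discreteCurl {D : Matrix (Fin N) (Fin N) R} (h1 : Commute D D1)
    (h2 : Commute D D2) (h3 : Commute D D3) :
    Commute (blockDiag3 D) (discreteCurl D1 D2 D3) := by
  refine commute_blockDiag3_blockMat3 fun i j => ?_
  fin_cases i <;> fin_cases j <;> simp [h1, h2, h3]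

end Curl

theorem discrete_energy_conservation_E3_general {N : ℕ} (μ ε : ℝ) (hμ : 0 < μ) (hε : 0 < ε)
    (D1 D2 D3 : Matrix (Fin N) (Fin N) ℝ)
    (h12 : D1 * D2 = D2 * D1) (h13 : D1 * D3 = D3 * D1) (h23 : D2 * D3 = D3 * D2)
    (hD1 : D1ᵀ = -D1) (hD2 : D2ᵀ = -D2) (hD3 : D3ᵀ = -D3)
    (𝔻 : Matrix (Fin 3 × Fin N) (Fin 3 × Fin N) ℝ)
    (h𝔻 : 𝔻 = blockMat3 ![![0, -D3, D2], ![D3, 0, -D1], ![-D2, D1, 0]])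
    (𝒟 : Matrix ((Fin 3 × Fin N) ⊕ (Fin 3 × Fin N)) ((Fin 3 × Fin N) ⊕ (Fin 3 × Fin N)) ℝ)
    (h𝒟 : 𝒟 = (Real.sqrt (μ * ε))⁻¹ • Matrix.fromBlocks 0 (-𝔻) 𝔻 0)
    (H E : ℝ → (Fin 3 × Fin N → ℝ))
    (hprop : ∀ t : ℝ,
      Sum.elim (fun i => Real.sqrt μ * H t i) (fun i => Real.sqrt ε * E t i) =
        (NormedSpace.exp (t • 𝒟)).mulVec
          (Sum.elim (fun i => Real.sqrt μ * H 0 i) (fun i => Real.sqrt ε * E 0 i)))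
    (B : Fin 3 → Matrix (Fin 3 × Fin N) (Fin 3 × Fin N) ℝ)
    (hB : ∀ k : Fin 3, B k = blockDiag3 (![D1, D2, D3] k)) :
    ∀ k : Fin 3, ∀ t : ℝ,
      μ * (∑ i, (B k).mulVec (H t) i ^ 2) + ε * (∑ i, (B k).mulVec (E t) i ^ 2) =
        μ * (∑ i, (B k).mulVec (H 0) i ^ 2) + ε * (∑ i, (B k).mulVec (E 0) i ^ 2) := by
  intro k t
  have hDk : ∀ l, Commute (![D1, D2, D3] k) (![D1, D2, D3] l) := by
    intro l
    fin_cases k <;> fin_cases l <;> simp [Commute, SemiconjBy, h12, h13, h23]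
  have hcurl : 𝔻ᵀ = 𝔻 := h𝔻 ▸ discreteCurl_transpose hD1 hD2 hD3
  have hBk : Commute (B k) 𝔻 :=
    hB k ▸ h𝔻 ▸ commute_blockDiag3_discreteCurl (hDk 0) (hDk 1) (hDk 2)
  have hskew : (t • 𝒟)ᵀ = -(t • 𝒟) := by
    rw [h𝒟, transpose_smul, transpose_smul, fromBlocks_zero_neg_transpose hcurl, smul_neg,
      smul_neg]
  have hcomm : Commute (fromBlocks (B k) 0 0 (B k)) (t • 𝒟) :=
    h𝒟 ▸ ((commute_fromBlocks_diag_fromBlocks_zero_neg hBk).smul_right _).smul_right _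
  have hscheme : Sum.elim (√μ • H t) (√ε • E t) =
      exp (t • 𝒟) *ᵥ Sum.elim (√μ • H 0) (√ε • E 0) := hprop t
  have key := sum_sq_mulVec_exp_mulVec hskew hcomm (Sum.elim (√μ • H 0) (√ε • E 0))
  rw [← hscheme] at key
  simpa only [fromBlocks_diag_mulVec_sumElim, mulVec_smul,
    sum_sq_sumElim_sqrt_smul hμ.le hε.le] using key

/-- the fully discrete exponential scheme exactly conserves the discrete energy ℰ₃: `μ‖B_k Hᵗ‖² + ε‖B_k Eᵗ‖²` is constant in `t` for each `k`. -/
theorem discrete_energy_conservation_E3 {N : ℕ} (hN : 0 < N) (μ ε : ℝ) (hμ : 0 < μ) (hε : 0 < ε)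
    (D1 D2 D3 : Matrix (Fin N) (Fin N) ℝ)
    (h12 : D1 * D2 = D2 * D1) (h13 : D1 * D3 = D3 * D1) (h23 : D2 * D3 = D3 * D2)
    (hD1 : D1ᵀ = -D1) (hD2 : D2ᵀ = -D2) (hD3 : D3ᵀ = -D3)
    (𝔻 : Matrix (Fin 3 × Fin N) (Fin 3 × Fin N) ℝ)
    (h𝔻 : 𝔻 = blockMat3 ![![0, -D3, D2], ![D3, 0, -D1], ![-D2, D1, 0]])
    (𝒟 : Matrix ((Fin 3 × Fin N) ⊕ (Fin 3 × Fin N)) ((Fin 3 × Fin N) ⊕ (Fin 3 × Fin N)) ℝ)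
    (h𝒟 : 𝒟 = (Real.sqrt (μ * ε))⁻¹ • Matrix.fromBlocks 0 (-𝔻) 𝔻 0)
    (H E : ℝ → (Fin 3 × Fin N → ℝ))
    (hprop : ∀ t : ℝ,
      Sum.elim (fun i => Real.sqrt μ * H t i) (fun i => Real.sqrt ε * E t i) =
        (NormedSpace.exp (t • 𝒟)).mulVec
          (Sum.elim (fun i => Real.sqrt μ * H 0 i) (fun i => Real.sqrt ε * E 0 i)))
    (B : Fin 3 → Matrix (Fin 3 × Fin N) (Fin 3 × Fin N) ℝ)
    (hB : ∀ k : Fin 3, B k = blockDiag3 (![D1, D2, D3] k)) :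
    ∀ k : Fin 3, ∀ t : ℝ,
      μ * (∑ i, (B k).mulVec (H t) i ^ 2) + ε * (∑ i, (B k).mulVec (E t) i ^ 2) =
        μ * (∑ i, (B k).mulVec (H 0) i ^ 2) + ε * (∑ i, (B k).mulVec (E 0) i ^ 2) :=
  discrete_energy_conservation_E3_general μ ε hμ hε D1 D2 D3 h12 h13 h23 hD1 hD2 hD3 𝔻 h𝔻 𝒟 h𝒟 H E
    hprop B hB
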